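/- For all l ∈ [0, π_2/2], the derivative of arctan(cleaf_2(l)) with respect to l equals -sleaf_2(l). -/

import Mathlib

/-!
Write `arcsl r = ∫₀ʳ dt/√(1-t⁴)`, so that `arcsl (sleaf l) = l` and
`arcsl (cleaf l) = arcsl 1 - l`. Solving `s² + c² + s²c² = 1` for `s` gives
`s = φ c` with `φ c = √(1-c⁴)/(1+c²)` (`leafComplement`), and indeed
`arcsl (φ c) + arcsl c = arcsl 1` because the derivative of the left side vanishes on `(0,1)`;
hence `sleaf = φ ∘ cleaf`. The inverse function theorem gives `cleaf' = -√(1-cleaf⁴)`, so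
`(arctan ∘ cleaf)' = -√(1-c⁴)/(1+c²) = -φ c = -sleaf`. At `l = 0`, where `cleaf = 1` and the
integrand blows up, the same formula (value `0`) follows from `1 - cleaf l ≤ 2 l²`.
-/

open Real Set Filter Topology MeasureTheory intervalIntegral

noncomputable def arcsl (r : ℝ) : ℝ := ∫ t in (0:ℝ)..r, 1 / √(1 - t ^ 4)

lemma one_div_sqrt_one_sub_pow_four_le (t : ℝ) : 1 / √(1 - t ^ 4) ≤ 1 / √(1 - t ^ 2) := by
  rcases le_or_gt (1 - t ^ 2) 0 with ht | ht
  · have h4 : 1 - t ^ 4 ≤ 0 := by nlinarith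
    simp [sqrt_eq_zero'.2 ht, sqrt_eq_zero'.2 h4]
  · exact one_div_le_one_div_of_le (sqrt_pos.2 ht) (sqrt_le_sqrt (by nlinarith))

lemma intervalIntegrable_one_div_sqrt_one_sub_pow_four :
    IntervalIntegrable (fun t : ℝ => 1 / √(1 - t ^ 4)) volume 0 1 := by
  have arcsin_deriv : IntervalIntegrable (fun t : ℝ => 1 / √(1 - t ^ 2)) volume 0 1 := by
    refine intervalIntegrable_deriv_of_nonneg continuous_arcsin.continuousOn
      (fun x hx => hasDerivAt_arcsin ?_ ?_) (fun x _ => by positivity)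
    all_goals simp only [zero_le_one, min_eq_left, max_eq_right, mem_Ioo] at hx; linarith
  refine arcsin_deriv.mono_fun (Measurable.aestronglyMeasurable (by fun_prop))
    (Eventually.of_forall fun t => ?_)
  simpa only [norm_div, norm_one, norm_of_nonneg (sqrt_nonneg _)]
    using one_div_sqrt_one_sub_pow_four_le t

lemma intervalIntegrable_one_div_sqrt_one_sub_pow_four_of_mem_Icc {a b : ℝ}
    (ha : a ∈ Icc (0:ℝ) 1) (hb : b ∈ Icc (0:ℝ) 1) :
    IntervalIntegrable (fun t : ℝ => 1 / √(1 - t ^ 4)) volume a b :=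
  intervalIntegrable_one_div_sqrt_one_sub_pow_four.mono_set <| by
    rw [uIcc_of_le zero_le_one]; exact uIcc_subset_Icc ha hb

lemma arcsl_sub_arcsl {a b : ℝ} (ha : a ∈ Icc (0:ℝ) 1) (hb : b ∈ Icc (0:ℝ) 1) :
    arcsl b - arcsl a = ∫ t in a..b, 1 / √(1 - t ^ 4) :=
  integral_interval_sub_left
    (intervalIntegrable_one_div_sqrt_one_sub_pow_four_of_mem_Icc (left_mem_Icc.2 zero_le_one) hb)
    (intervalIntegrable_one_div_sqrt_one_sub_pow_four_of_mem_Icc (left_mem_Icc.2 zero_le_one) ha)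

lemma sub_le_arcsl_sub_arcsl {a b : ℝ} (ha : a ∈ Icc (0:ℝ) 1) (hb : b ∈ Icc (0:ℝ) 1)
    (hab : a ≤ b) : b - a ≤ arcsl b - arcsl a := by
  rw [arcsl_sub_arcsl ha hb]
  calc b - a = ∫ _ in a..b, (1:ℝ) := by simp
    _ ≤ ∫ t in a..b, 1 / √(1 - t ^ 4) := by
      refine integral_mono_on_of_le_Ioo hab intervalIntegrable_const
        (intervalIntegrable_one_div_sqrt_one_sub_pow_four_of_mem_Icc ha hb) fun t ht => ?_
      have h4 : t ^ 4 < 1 := pow_lt_one₀ (ha.1.trans ht.1.le) (ht.2.trans_le hb.2) four_ne_zero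
      rw [le_div_iff₀ (sqrt_pos.2 (by linarith)), one_mul, sqrt_le_one]
      linarith [pow_nonneg (ha.1.trans ht.1.le) 4]

lemma abs_sub_le_abs_arcsl_sub_arcsl {a b : ℝ} (ha : a ∈ Icc (0:ℝ) 1) (hb : b ∈ Icc (0:ℝ) 1) :
    |b - a| ≤ |arcsl b - arcsl a| := by
  rcases le_total a b with hab | hba
  · have := sub_le_arcsl_sub_arcsl ha hb hab
    rw [abs_of_nonneg (sub_nonneg.2 hab), abs_of_nonneg (by linarith)]
    exact this
  · have := sub_le_arcsl_sub_arcsl hb ha hba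
    rw [abs_sub_comm, abs_of_nonneg (sub_nonneg.2 hba), abs_sub_comm,
      abs_of_nonneg (by linarith)]
    exact this

lemma arcsl_injOn : InjOn arcsl (Icc 0 1) := fun a ha b hb hab =>
  (sub_eq_zero.1 (by simpa [hab] using abs_sub_le_abs_arcsl_sub_arcsl ha hb)).symm

lemma continuousOn_arcsl : ContinuousOn arcsl (Icc 0 1) := by
  rw [← uIcc_of_le zero_le_one]
  exact continuousOn_primitive_interval' intervalIntegrable_one_div_sqrt_one_sub_pow_four
    left_mem_uIcc

lemma one_sub_pow_four_pos {t : ℝ} (ht : t ∈ Ioo (-1:ℝ) 1) : 0 < 1 - t ^ 4 := by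
  have : |t| ^ 4 < 1 := pow_lt_one₀ (abs_nonneg t) (abs_lt.2 ht) four_ne_zero
  rw [pow_abs, abs_of_nonneg (by positivity)] at this
  linarith

lemma arcsl_zero : arcsl 0 = 0 := integral_same

lemma hasDerivAt_arcsl {c : ℝ} (hc : c ∈ Ioo (-1:ℝ) 1) :
    HasDerivAt arcsl (1 / √(1 - c ^ 4)) c := by
  have hcont : ContinuousOn (fun t : ℝ => 1 / √(1 - t ^ 4)) (Ioo (-1) 1) :=
    continuousOn_const.div (by fun_prop) fun t ht => (sqrt_pos.2 (one_sub_pow_four_pos ht)).ne'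
  have hsub : uIcc 0 c ⊆ Ioo (-1) 1 := ordConnected_Ioo.uIcc_subset (by norm_num) hc
  exact integral_hasDerivAt_right ((hcont.mono hsub).intervalIntegrable)
    (hcont.stronglyMeasurableAtFilter isOpen_Ioo c hc)
    (hcont.continuousAt (isOpen_Ioo.mem_nhds hc))

noncomputable def leafComplement (t : ℝ) : ℝ := √(1 - t ^ 4) / (1 + t ^ 2)

lemma leafComplement_one : leafComplement 1 = 0 := by simp [leafComplement]

lemma continuous_leafComplement : Continuous leafComplement :=
  Continuous.div (by fun_prop) (by fun_prop) fun t => by positivity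

lemma sqrt_one_sub_pow_four_le_one (t : ℝ) : √(1 - t ^ 4) ≤ 1 :=
  sqrt_le_one.2 (by linarith [pow_nonneg (sq_nonneg t) 2, show t ^ 4 = (t ^ 2) ^ 2 by ring])

lemma leafComplement_mem_Icc (t : ℝ) : leafComplement t ∈ Icc (0:ℝ) 1 :=
  ⟨by unfold leafComplement; positivity, (div_le_one (by positivity)).2 <| by
    linarith [sqrt_one_sub_pow_four_le_one t, sq_nonneg t]⟩

lemma leafComplement_lt_one {t : ℝ} (ht : t ≠ 0) : leafComplement t < 1 :=
  (div_lt_one (by positivity)).2 <| by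
    linarith [sqrt_one_sub_pow_four_le_one t, pow_pos (abs_pos.2 ht) 2, sq_abs t]

lemma leafComplement_sq {t : ℝ} (ht : t ∈ Icc (-1:ℝ) 1) :
    leafComplement t ^ 2 = (1 - t ^ 2) / (1 + t ^ 2) := by
  have ht2 : t ^ 2 ≤ 1 := sq_le_one_iff_abs_le_one t |>.2 (abs_le.2 ht)
  rw [leafComplement, div_pow, sq_sqrt (by nlinarith)]
  field_simp
  ring

lemma sqrt_one_sub_leafComplement_pow_four {t : ℝ} (ht : t ∈ Icc (0:ℝ) 1) :
    √(1 - leafComplement t ^ 4) = 2 * t / (1 + t ^ 2) := by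
  have h : 1 - leafComplement t ^ 4 = (2 * t / (1 + t ^ 2)) ^ 2 := by
    rw [show leafComplement t ^ 4 = (leafComplement t ^ 2) ^ 2 by ring,
      leafComplement_sq ⟨by linarith [ht.1], ht.2⟩]
    field_simp
    ring
  rw [h, sqrt_sq (by have := ht.1; positivity)]

lemma one_sub_le_two_mul_leafComplement_sq {t : ℝ} (ht : t ∈ Icc (0:ℝ) 1) :
    1 - t ≤ 2 * leafComplement t ^ 2 := by
  rw [leafComplement_sq ⟨by linarith [ht.1], ht.2⟩, mul_div_assoc', le_div_iff₀ (by positivity)]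
  nlinarith [mul_nonneg (sub_nonneg.2 ht.2) (show 0 ≤ 1 + 2 * t - t ^ 2 by nlinarith [ht.1, ht.2])]

lemma hasDerivAt_leafComplement {t : ℝ} (ht : t ∈ Ioo (-1:ℝ) 1) :
    HasDerivAt leafComplement (-(2 * t) / ((1 + t ^ 2) * √(1 - t ^ 4))) t := by
  have h4 := one_sub_pow_four_pos ht
  have hS : 0 < √(1 - t ^ 4) := sqrt_pos.2 h4
  have hnum : HasDerivAt (fun u : ℝ => √(1 - u ^ 4)) (-(4 * t ^ 3) / (2 * √(1 - t ^ 4))) t := by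
    simpa using ((hasDerivAt_pow 4 t).const_sub 1).sqrt h4.ne'
  have hden : HasDerivAt (fun u : ℝ => 1 + u ^ 2) (2 * t) t := by
    simpa using (hasDerivAt_pow 2 t).const_add 1
  refine (hnum.div hden (by positivity)).congr_deriv ?_
  field_simp
  rw [sq_sqrt h4.le]
  ring

lemma hasDerivAt_arcsl_leafComplement_add_arcsl {t : ℝ} (ht : t ∈ Ioo (0:ℝ) 1) :
    HasDerivAt (fun u => arcsl (leafComplement u) + arcsl u) 0 t := by
  have ht' : t ∈ Ioo (-1:ℝ) 1 := ⟨by linarith [ht.1], ht.2⟩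
  have hφ : leafComplement t ∈ Ioo (-1:ℝ) 1 :=
    ⟨by linarith [(leafComplement_mem_Icc t).1], leafComplement_lt_one ht.1.ne'⟩
  have h4 : 0 < √(1 - t ^ 4) := sqrt_pos.2 (one_sub_pow_four_pos ht')
  refine (((hasDerivAt_arcsl hφ).comp t (hasDerivAt_leafComplement ht')).add
    (hasDerivAt_arcsl ht')).congr_deriv ?_
  rw [sqrt_one_sub_leafComplement_pow_four ⟨ht.1.le, ht.2.le⟩]
  have ht0 : t ≠ 0 := ht.1.ne'
  field_simp
  ring

lemma arcsl_leafComplement_add_arcsl {t : ℝ} (ht : t ∈ Icc (0:ℝ) 1) :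
    arcsl (leafComplement t) + arcsl t = arcsl 1 := by
  rcases ht.2.eq_or_lt with rfl | ht1
  · simp [leafComplement_one, arcsl_zero]
  obtain ⟨c, _, hc⟩ := exists_hasDerivAt_eq_slope (fun u => arcsl (leafComplement u) + arcsl u)
    (fun _ => 0) ht1
    ((continuousOn_arcsl.comp continuous_leafComplement.continuousOn
      fun u _ => leafComplement_mem_Icc u).add
        (continuousOn_arcsl.mono (Icc_subset_Icc ht.1 le_rfl)))
    fun u hu => hasDerivAt_arcsl_leafComplement_add_arcsl ⟨ht.1.trans_lt hu.1, hu.2⟩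
  rw [eq_comm, div_eq_zero_iff, sub_eq_zero, sub_eq_zero, leafComplement_one] at hc
  rcases hc with hc | hc
  · simpa [arcsl_zero] using hc.symm
  · exact absurd hc ht1.ne'

theorem HasDerivWithinAt.of_local_left_inverse {𝕜 : Type*} [NontriviallyNormedField 𝕜]
    {f g : 𝕜 → 𝕜} {f' a : 𝕜} {s : Set 𝕜} (hg : ContinuousWithinAt g s a)
    (hf : HasDerivAt f f' (g a)) (hf' : f' ≠ 0) (ha : a ∈ s)
    (hfg : ∀ᶠ y in 𝓝[s] a, f (g y) = y) : HasDerivWithinAt g f'⁻¹ s a :=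
  ((hf.hasFDerivAt_equiv hf').hasFDerivWithinAt (s := univ)).of_local_left_inverse
    (by simpa only [nhdsWithin_univ] using hg.tendsto) ha hfg

theorem hasDerivWithinAt_zero_of_norm_sub_le_sq {𝕜 F : Type*} [NontriviallyNormedField 𝕜]
    [NormedAddCommGroup F] [NormedSpace 𝕜 F] {f : 𝕜 → F} {s : Set 𝕜} {x : 𝕜} (C : ℝ)
    (h : ∀ y ∈ s, ‖f y - f x‖ ≤ C * ‖y - x‖ ^ 2) : HasDerivWithinAt f 0 s x := by
  rw [hasDerivWithinAt_iff_isLittleO]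
  simp only [smul_zero, sub_zero]
  refine Asymptotics.IsBigO.trans_isLittleO ?_
    ((Asymptotics.isLittleO_pow_sub_sub x one_lt_two).mono nhdsWithin_le_nhds)
  refine Asymptotics.IsBigO.of_bound C ?_
  filter_upwards [self_mem_nhdsWithin] with y hy
  simpa using h y hy

def IsCleaf (g : ℝ → ℝ) : Prop :=
  ∀ y ∈ Icc 0 (arcsl 1), g y ∈ Icc (0:ℝ) 1 ∧ arcsl 1 - arcsl (g y) = y

namespace IsCleaf

variable {g : ℝ → ℝ}

lemma lipschitzOnWith (hg : IsCleaf g) : LipschitzOnWith 1 g (Icc 0 (arcsl 1)) :=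
  LipschitzOnWith.of_dist_le_mul fun y hy l hl => by
    have h := abs_sub_le_abs_arcsl_sub_arcsl (hg l hl).1 (hg y hy).1
    rw [show arcsl (g y) - arcsl (g l) = l - y by linarith [(hg y hy).2, (hg l hl).2],
      abs_sub_comm l y] at h
    simpa [Real.dist_eq] using h

lemma eq_one_iff (hg : IsCleaf g) {l : ℝ} (hl : l ∈ Icc 0 (arcsl 1)) : g l = 1 ↔ l = 0 := by
  constructor
  · intro h
    simpa [h] using (hg l hl).2.symm
  · rintro rfl
    exact arcsl_injOn (hg 0 hl).1 (right_mem_Icc.2 zero_le_one) (by linarith [(hg 0 hl).2])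

lemma one_sub_le_two_mul_sq (hg : IsCleaf g) {y : ℝ} (hy : y ∈ Icc 0 (arcsl 1)) :
    1 - g y ≤ 2 * y ^ 2 := by
  obtain ⟨hgy, hgy_eq⟩ := hg y hy
  have hφ := leafComplement_mem_Icc (g y)
  -- `leafComplement (g y)` is `sleaf y`, and `sleaf y ≤ arcsl (sleaf y) = y`
  have hφy : leafComplement (g y) ≤ y := by
    have := sub_le_arcsl_sub_arcsl (left_mem_Icc.2 zero_le_one) hφ hφ.1
    rw [sub_zero, arcsl_zero, sub_zero] at this
    linarith [arcsl_leafComplement_add_arcsl hgy, hgy_eq]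
  nlinarith [one_sub_le_two_mul_leafComplement_sq hgy, hφ.1]

lemma hasDerivWithinAt (hg : IsCleaf g) {l : ℝ} (hl : l ∈ Icc 0 (arcsl 1)) :
    HasDerivWithinAt g (-√(1 - g l ^ 4)) (Icc 0 (arcsl 1)) l := by
  rcases hl.1.eq_or_lt with rfl | hl0
  · rw [(hg.eq_one_iff hl).2 rfl, one_pow, sub_self, sqrt_zero, neg_zero]
    refine hasDerivWithinAt_zero_of_norm_sub_le_sq 2 fun y hy => ?_
    rw [(hg.eq_one_iff hl).2 rfl, Real.norm_eq_abs, abs_sub_comm,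
      abs_of_nonneg (sub_nonneg.2 (hg y hy).1.2), Real.norm_eq_abs, sub_zero, sq_abs]
    exact hg.one_sub_le_two_mul_sq hy
  · have hgl : g l ∈ Ioo (-1:ℝ) 1 := ⟨by linarith [(hg l hl).1.1],
      lt_of_le_of_ne (hg l hl).1.2 fun h => hl0.ne' ((hg.eq_one_iff hl).1 h)⟩
    have h4 : 0 < √(1 - g l ^ 4) := sqrt_pos.2 (one_sub_pow_four_pos hgl)
    have := HasDerivWithinAt.of_local_left_inverse
      (hg.lipschitzOnWith.continuousOn.continuousWithinAt hl)
      ((hasDerivAt_arcsl hgl).const_sub (arcsl 1)) (neg_ne_zero.2 (one_div_pos.2 h4).ne') hl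
      (eventually_nhdsWithin_of_forall fun y hy => (hg y hy).2)
    simpa [one_div, inv_inv] using this

end IsCleaf

theorem deriv_arctan_cleaf (π₂ : ℝ) (hπ : π₂ = 2 * ∫ t in (0:ℝ)..1, 1 / Real.sqrt (1 - t ^ 4))
    (sleaf : ℝ → ℝ)
    (hs : ∀ l ∈ Set.Icc 0 (π₂ / 2), sleaf l ∈ Set.Icc (0:ℝ) 1 ∧
      (∫ t in (0:ℝ)..(sleaf l), 1 / Real.sqrt (1 - t ^ 4)) = l)
    (cleaf : ℝ → ℝ)
    (hc : ∀ l ∈ Set.Icc 0 (π₂ / 2), cleaf l ∈ Set.Icc (0:ℝ) 1 ∧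
      (∫ t in (cleaf l)..1, 1 / Real.sqrt (1 - t ^ 4)) = l) :
    ∀ l ∈ Set.Icc 0 (π₂ / 2),
      derivWithin (fun x => Real.arctan (cleaf x)) (Set.Icc 0 (π₂ / 2)) l = -sleaf l := by
  have hπ₂ : π₂ / 2 = arcsl 1 := by rw [hπ, arcsl]; ring
  rw [hπ₂] at hs hc ⊢
  intro l hl
  have hcleaf : IsCleaf cleaf := fun y hy =>
    ⟨(hc y hy).1, (arcsl_sub_arcsl (hc y hy).1 (right_mem_Icc.2 zero_le_one)).trans (hc y hy).2⟩
  have hsleaf : sleaf l = leafComplement (cleaf l) :=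
    arcsl_injOn (hs l hl).1 (leafComplement_mem_Icc _) <| by
      linarith [show arcsl (sleaf l) = l from (hs l hl).2,
        arcsl_leafComplement_add_arcsl (hc l hl).1, (hcleaf l hl).2]
  have harcsl_one_pos : 0 < arcsl 1 := by
    linarith [sub_le_arcsl_sub_arcsl (left_mem_Icc.2 zero_le_one) (right_mem_Icc.2 zero_le_one)
      zero_le_one, arcsl_zero]
  rw [(hcleaf.hasDerivWithinAt hl).arctan.derivWithin (uniqueDiffOn_Icc harcsl_one_pos l hl),
    hsleaf, leafComplement]
  ring
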